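/- arXiv:0710.1354 — 2 statements merged into one kernel-verified Lean document; each statement's English description precedes it below -/
import Mathlib

section
/- Let p be an odd prime such that 2 is a semiprimitive root of p, i.e., 2 has multiplicative order (p−1)/2 modulo p and the congruence 2^x ≡ −1 (mod p) has no solution. Then for all natural numbers x ≤ y, S_p([2^p x, 2^p y)) = (−1)^{(p−1)/2} · p · S_p([2x, 2y)), where S_p([a, b)) denotes S_p(b) − S_p(a). -/
/-!
Write `n = 2^t q + r` with `r < 2^t`. Binary digit sums add up, so `S_p(2^t x)` is a sum over
`q < x` of `(-1)^{σ(q)}` times a block sum `B_t(c)`, the signed count of the `r < 2^t` with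
`r ≡ -c (mod p)`, taken at `c = 2^t q`. Detecting the residue class with a primitive additive
character `ψ` of `ZMod p` and using `∑_{r < 2^t} (-1)^{σ(r)} z^r = ∏_{k < t} (1 - z^{2^k})` gives
`p B_t(c) = ∑_j ψ(jc) ∏_{k < t} (1 - ψ(j)^{2^k})`.

If 2 is a semiprimitive root, the residues `2^k` and `-2^k` (`k < d = (p-1)/2`) are exactly
the nonzero residues. For a primitive `p`-th root of unity `z` put `A = ∏_{k < d} (1 - z^{2^k})`;
reflecting `a ↦ -a` costs the factor `(-1)^d z^{-∑ 2^k}`, and `∑_{k < d} 2^k ≡ 0`, so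
`(-1)^d A² = ∏_{a ≠ 0} (1 - z^a) = p`. Since `2^k mod p` has period `d` and `p = 2d + 1`,
`∏_{k < p} (1 - z^{2^k}) = A² (1 - z) = (-1)^d p (1 - z)`. Hence `B_p(c) = (-1)^d p B_1(c)`, and
as `2^p ≡ 2 (mod p)` the blocks of `S_p(2^p x)` and of `S_p(2x)` correspond.
-/

/-- The Newman sum `S_m(x) = ∑_{0 ≤ n < x, m ∣ n} (-1)^{σ(n)}`, where `σ(n)` is the
number of 1's in the binary expansion of `n`. -/
def newmanSum (m x : ℕ) : ℤ :=
  ∑ n ∈ Finset.range x, if m ∣ n then (-1 : ℤ) ^ (Nat.digits 2 n).sum else 0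

open Finset

theorem Nat.digits_sum_pow_mul_add {b t q r : ℕ} (hb : 1 < b) (hr : r < b ^ t) :
    (b.digits (b ^ t * q + r)).sum = (b.digits q).sum + (b.digits r).sum := by
  rcases Nat.eq_zero_or_pos q with rfl | hq
  · simp
  have hlen : (b.digits r).length ≤ t := (Nat.digits_length_le_iff hb r).2 hr
  have h :=
    Nat.digits_append_zeroes_append_digits (k := t - (b.digits r).length) (n := r) hb hq
  rw [Nat.add_sub_cancel' hlen] at h
  rw [add_comm, ← h, List.sum_append, List.sum_append, List.sum_replicate, smul_zero, add_zero,
    add_comm]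

theorem Finset.sum_range_mul_eq_sum_sum {M : Type*} [AddCommMonoid M] (f : ℕ → M) (m x : ℕ) :
    ∑ n ∈ range (m * x), f n = ∑ q ∈ range x, ∑ r ∈ range m, f (m * q + r) := by
  induction x with
  | zero => simp
  | succ x ih => rw [Nat.mul_succ, sum_range_add, ih, sum_range_succ]

def thueMorseSign (n : ℕ) : ℤ := (-1) ^ (Nat.digits 2 n).sum

theorem thueMorseSign_two_pow_mul_add {t q r : ℕ} (hr : r < 2 ^ t) :
    thueMorseSign (2 ^ t * q + r) = thueMorseSign q * thueMorseSign r := by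
  rw [thueMorseSign, Nat.digits_sum_pow_mul_add one_lt_two hr, pow_add]
  rfl

theorem thueMorseSign_two_pow_add {t r : ℕ} (hr : r < 2 ^ t) :
    thueMorseSign (2 ^ t + r) = -thueMorseSign r := by
  simpa [thueMorseSign] using thueMorseSign_two_pow_mul_add (q := 1) hr

theorem sum_range_two_pow_thueMorseSign_mul_pow {R : Type*} [CommRing R] (z : R) (t : ℕ) :
    ∑ r ∈ range (2 ^ t), (thueMorseSign r : R) * z ^ r = ∏ k ∈ range t, (1 - z ^ 2 ^ k) := by
  induction t with
  | zero => simp [thueMorseSign]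
  | succ t ih =>
    have hshift : ∀ r ∈ range (2 ^ t), (thueMorseSign (2 ^ t + r) : R) * z ^ (2 ^ t + r) =
        -z ^ 2 ^ t * ((thueMorseSign r : R) * z ^ r) := fun r hr => by
      rw [thueMorseSign_two_pow_add (mem_range.1 hr), pow_add]
      push_cast
      ring
    rw [pow_succ, mul_two, sum_range_add, sum_congr rfl hshift, ← mul_sum, ih, prod_range_succ]
    ring

def residueBlockSum (m t : ℕ) (c : ZMod m) : ℤ :=
  ∑ r ∈ range (2 ^ t), if c + r = 0 then thueMorseSign r else 0

theorem newmanSum_two_pow_mul (m t x : ℕ) :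
    newmanSum m (2 ^ t * x) =
      ∑ q ∈ range x, thueMorseSign q * residueBlockSum m t (2 ^ t * q) := by
  rw [newmanSum, sum_range_mul_eq_sum_sum]
  refine sum_congr rfl fun q _ => ?_
  rw [residueBlockSum, mul_sum]
  refine sum_congr rfl fun r hr => ?_
  have hdvd : m ∣ 2 ^ t * q + r ↔ (2 ^ t * q + r : ZMod m) = 0 := by
    rw [← ZMod.natCast_eq_zero_iff]; push_cast; rfl
  simp only [hdvd, mul_ite, mul_zero]
  split_ifs
  · exact thueMorseSign_two_pow_mul_add (mem_range.1 hr)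
  · rfl

theorem AddChar.map_finset_sum {ι A M : Type*} [AddCommMonoid A] [CommMonoid M]
    (ψ : AddChar A M) (s : Finset ι) (x : ι → A) : ψ (∑ i ∈ s, x i) = ∏ i ∈ s, ψ (x i) :=
  map_prod ψ.toMonoidHom (fun i => Multiplicative.ofAdd (x i)) s

theorem AddChar.apply_eq_pow_val {N : ℕ} [NeZero N] {M : Type*} [CommMonoid M]
    (ψ : AddChar (ZMod N) M) (a : ZMod N) : ψ a = ψ 1 ^ a.val := by
  rw [← map_nsmul_eq_pow, nsmul_eq_mul, mul_one, ZMod.natCast_zmod_val]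

theorem AddChar.IsPrimitive.isPrimitiveRoot_apply_one {N : ℕ} [NeZero N] {M : Type*}
    [CommMonoid M] {ψ : AddChar (ZMod N) M} (hψ : ψ.IsPrimitive) : IsPrimitiveRoot (ψ 1) N where
  pow_eq_one := by
    rw [← map_nsmul_eq_pow, nsmul_eq_mul, mul_one, ZMod.natCast_self, map_zero_eq_one]
  dvd_of_pow_eq_one l hl := by
    rw [← map_nsmul_eq_pow, nsmul_eq_mul, mul_one, hψ.zmod_char_eq_one_iff] at hl
    exact (ZMod.natCast_eq_zero_iff l N).1 hl

section PrimitiveCharacter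

variable {p : ℕ} [NeZero p] {R : Type*} [CommRing R] [IsDomain R] {ψ : AddChar (ZMod p) R}

theorem AddChar.IsPrimitive.prod_erase_zero_one_sub (hψ : ψ.IsPrimitive) :
    ∏ a ∈ univ.erase (0 : ZMod p), (1 - ψ a) = p := by
  obtain ⟨n, rfl⟩ : ∃ n, p = n + 1 := Nat.exists_eq_add_one.2 (NeZero.pos p)
  push_cast
  rw [← hψ.isPrimitiveRoot_apply_one.prod_one_sub_pow_eq_order]
  have hval {a : ZMod (n + 1)} (ha : a ∈ univ.erase 0) : 1 ≤ a.val :=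
    ZMod.val_pos.2 (ne_of_mem_erase ha)
  have hcast {k : ℕ} (hk : k ∈ range n) : ((k + 1 : ℕ) : ZMod (n + 1)).val = k + 1 :=
    ZMod.val_cast_of_lt (by simpa using hk)
  refine prod_nbij' (fun a => a.val - 1) (fun k => ((k + 1 : ℕ) : ZMod (n + 1))) ?_ ?_ ?_ ?_ ?_
  · intro a ha
    have := a.val_lt
    have := hval ha
    exact mem_range.2 (by omega)
  · intro k hk
    exact mem_erase.2 ⟨fun h => by simpa [h] using hcast hk, mem_univ _⟩
  · intro a ha
    simp [Nat.sub_add_cancel (hval ha)]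
  · intro k hk
    simp only [hcast hk, Nat.add_sub_cancel]
  · intro a ha
    rw [Nat.sub_add_cancel (hval ha), AddChar.apply_eq_pow_val]

theorem natCast_mul_residueBlockSum (hψ : ψ.IsPrimitive) (t : ℕ) (c : ZMod p) :
    (p : R) * residueBlockSum p t c = ∑ j, ψ (j * c) * ∏ k ∈ range t, (1 - ψ j ^ 2 ^ k) := by
  have horth (r : ℕ) : ∑ j, ψ (j * c) * ψ j ^ r = if c + r = 0 then (p : R) else 0 := by
    simp_rw [← AddChar.map_nsmul_eq_pow, nsmul_eq_mul, mul_comm (r : ZMod p),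
      ← AddChar.map_add_eq_mul, ← mul_add]
    rw [AddChar.sum_mulShift _ hψ, ZMod.card]
    split_ifs <;> simp
  calc (p : R) * residueBlockSum p t c
      = ∑ r ∈ range (2 ^ t), (thueMorseSign r : R) * if c + r = 0 then (p : R) else 0 := by
        simp only [residueBlockSum, Int.cast_sum, mul_sum, Int.cast_ite, Int.cast_zero, mul_ite,
          mul_zero]
        exact sum_congr rfl fun r _ => by split_ifs <;> simp [mul_comm]
    _ = ∑ j, ψ (j * c) * ∑ r ∈ range (2 ^ t), (thueMorseSign r : R) * ψ j ^ r := by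
        simp_rw [← horth, mul_sum]
        rw [sum_comm]
        exact sum_congr rfl fun j _ => sum_congr rfl fun r _ => by ring
    _ = _ := by simp_rw [sum_range_two_pow_thueMorseSign_mul_pow]

end PrimitiveCharacter

theorem prod_range_two_mul_add_one_pow_of_pow_eq_one {G M : Type*} [Monoid G] [CommMonoid M]
    (f : G → M) {x : G} {d : ℕ} (hx : x ^ d = 1) :
    ∏ k ∈ range (2 * d + 1), f (x ^ k) = (∏ k ∈ range d, f (x ^ k)) ^ 2 * f 1 := by
  simp_rw [prod_range_succ, two_mul, prod_range_add, pow_add, hx, one_mul, sq]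

def IsSemiprimitiveRoot {p : ℕ} (g : ZMod p) : Prop :=
  orderOf g = (p - 1) / 2 ∧ ¬ ∃ x : ℕ, g ^ x = -1

namespace IsSemiprimitiveRoot

variable {p : ℕ} {g : ZMod p}

theorem pow_half (hg : IsSemiprimitiveRoot g) : g ^ ((p - 1) / 2) = 1 :=
  hg.1 ▸ pow_orderOf_eq_one g

theorem prod_erase_zero [Fact p.Prime] (hodd : Odd p) (hg : IsSemiprimitiveRoot g) {M : Type*}
    [CommMonoid M] (f : ZMod p → M) :
    ∏ a ∈ univ.erase 0, f a =
      (∏ k ∈ range ((p - 1) / 2), f (g ^ k)) * ∏ k ∈ range ((p - 1) / 2), f (-g ^ k) := by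
  set d := (p - 1) / 2
  have hp2 := (Fact.out : p.Prime).two_le
  have hp : p = 2 * d + 1 := by obtain ⟨m, rfl⟩ := hodd; omega
  have hg0 : g ≠ 0 := by
    rintro rfl
    have h01 : (0 : ZMod p) ^ d = 1 := hg.pow_half
    rw [zero_pow (by omega)] at h01
    exact zero_ne_one h01
  have hinj : Set.InjOn (g ^ ·) (range d) := by
    rw [coe_range, ← show orderOf g = d from hg.1]
    exact pow_injOn_Iio_orderOf
  have hneg_inj : Set.InjOn (fun k => -g ^ k) (range d) := neg_injective.comp_injOn hinj
  have hdisj : Disjoint ((range d).image (g ^ ·)) ((range d).image (fun k => -g ^ k)) := by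
    simp only [disjoint_left, mem_image, mem_range, not_exists, not_and]
    rintro _ ⟨i, -, rfl⟩ j hj hij
    refine hg.2 ⟨i + (d - j), ?_⟩
    rw [pow_add, ← hij, neg_mul, ← pow_add, Nat.add_sub_cancel' hj.le, hg.pow_half]
  have hunion : (range d).image (g ^ ·) ∪ (range d).image (fun k => -g ^ k) = univ.erase 0 := by
    refine eq_of_subset_of_card_le (fun a ha => ?_) ?_
    · simp only [mem_union, mem_image] at ha
      rcases ha with ⟨k, -, rfl⟩ | ⟨k, -, rfl⟩
      · exact mem_erase.2 ⟨pow_ne_zero k hg0, mem_univ _⟩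
      · exact mem_erase.2 ⟨neg_ne_zero.2 (pow_ne_zero k hg0), mem_univ _⟩
    · rw [card_union_of_disjoint hdisj, card_image_of_injOn hinj, card_image_of_injOn hneg_inj,
        card_erase_of_mem (mem_univ _), card_univ, ZMod.card, card_range]
      omega
  rw [← hunion, prod_union hdisj, prod_image hinj, prod_image hneg_inj]

end IsSemiprimitiveRoot

section BlockProduct

variable {p : ℕ} [Fact p.Prime] {R : Type*} [CommRing R] [IsDomain R]

theorem IsSemiprimitiveRoot.prod_one_sub_addChar_pow (hodd : Odd p) {g : ZMod p}
    (hg : IsSemiprimitiveRoot g) (hg1 : g ≠ 1) {ψ : AddChar (ZMod p) R} (hψ : ψ.IsPrimitive) :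
    ∏ k ∈ range p, (1 - ψ (g ^ k)) = (-1) ^ ((p - 1) / 2) * p * (1 - ψ 1) := by
  set d := (p - 1) / 2
  set A := ∏ k ∈ range d, (1 - ψ (g ^ k))
  have hsum : ∑ k ∈ range d, g ^ k = 0 := by
    have h := geom_sum_mul g d
    rw [hg.pow_half, sub_self] at h
    exact (mul_eq_zero.1 h).resolve_right (sub_ne_zero.2 hg1)
  have hreflect (a : ZMod p) : 1 - ψ (-a) = -ψ (-a) * (1 - ψ a) := by
    have h : ψ (-a) * ψ a = 1 := by
      rw [← AddChar.map_add_eq_mul, neg_add_cancel, AddChar.map_zero_eq_one]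
    linear_combination -h
  have hneg : ∏ k ∈ range d, (1 - ψ (-g ^ k)) = (-1) ^ d * A := by
    rw [prod_congr rfl fun k _ => hreflect (g ^ k), prod_mul_distrib, prod_neg, card_range,
      ← AddChar.map_finset_sum, sum_neg_distrib, hsum, neg_zero, AddChar.map_zero_eq_one, mul_one]
  have hA : (-1) ^ d * A ^ 2 = p := by
    rw [← hψ.prod_erase_zero_one_sub, hg.prod_erase_zero hodd (fun a => 1 - ψ a), hneg]
    ring
  have hsign : ((-1 : R) ^ d) ^ 2 = 1 := by rw [← pow_mul, mul_comm, pow_mul]; norm_num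
  have hp : p = 2 * d + 1 := by obtain ⟨m, rfl⟩ := hodd; omega
  rw [show range p = range (2 * d + 1) by rw [← hp],
    prod_range_two_mul_add_one_pow_of_pow_eq_one (fun a => 1 - ψ a) hg.pow_half]
  linear_combination (-1 : R) ^ d * (1 - ψ 1) * hA - A ^ 2 * (1 - ψ 1) * hsign

theorem IsSemiprimitiveRoot.prod_one_sub_pow_two_pow (hodd : Odd p)
    (h2 : IsSemiprimitiveRoot (2 : ZMod p)) {z : R} (hz : z ^ p = 1) :
    ∏ k ∈ range p, (1 - z ^ 2 ^ k) = (-1) ^ ((p - 1) / 2) * p * (1 - z) := by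
  by_cases hz1 : z = 1
  · subst hz1
    simp [prod_eq_zero (mem_range.2 (Fact.out : p.Prime).pos)]
  have hprim : IsPrimitiveRoot z p := orderOf_eq_prime hz hz1 ▸ IsPrimitiveRoot.orderOf z
  have h21 : (2 : ZMod p) ≠ 1 := fun h => one_ne_zero (by linear_combination h : (1 : ZMod p) = 0)
  have h := h2.prod_one_sub_addChar_pow hodd h21
    (AddChar.zmodChar_primitive_of_primitive_root p hprim)
  have happly (n : ℕ) : AddChar.zmodChar p hz n = z ^ n := AddChar.zmodChar_apply' hz n
  convert h using 4 with k
  · rw [← happly]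
    push_cast
    rfl
  · simpa using (happly 1).symm

end BlockProduct

section Semiprimitive

variable {p : ℕ} [Fact p.Prime]

theorem residueBlockSum_self (hodd : Odd p) (h2 : IsSemiprimitiveRoot (2 : ZMod p))
    (c : ZMod p) :
    residueBlockSum p p c = (-1) ^ ((p - 1) / 2) * p * residueBlockSum p 1 c := by
  have hψ := ZMod.isPrimitive_stdAddChar p
  have hp0 : (p : ℂ) ≠ 0 := Nat.cast_ne_zero.2 (Fact.out : p.Prime).ne_zero
  apply Int.cast_injective (α := ℂ)
  apply mul_left_cancel₀ hp0
  push_cast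
  rw [natCast_mul_residueBlockSum hψ, mul_left_comm, natCast_mul_residueBlockSum hψ, mul_sum]
  refine sum_congr rfl fun j _ => ?_
  have hroot : ZMod.stdAddChar j ^ p = 1 := by
    rw [← AddChar.map_nsmul_eq_pow, nsmul_eq_mul, ZMod.natCast_self, zero_mul,
      AddChar.map_zero_eq_one]
  rw [h2.prod_one_sub_pow_two_pow hodd hroot, prod_range_one, pow_zero, pow_one]
  exact mul_left_comm _ _ _

theorem newmanSum_two_pow_mul_self (hodd : Odd p) (h2 : IsSemiprimitiveRoot (2 : ZMod p))
    (x : ℕ) :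
    newmanSum p (2 ^ p * x) = (-1) ^ ((p - 1) / 2) * p * newmanSum p (2 * x) := by
  have h1 := newmanSum_two_pow_mul p 1 x
  rw [pow_one] at h1
  rw [newmanSum_two_pow_mul, h1, mul_sum]
  refine sum_congr rfl fun q _ => ?_
  rw [show (2 : ZMod p) ^ p = 2 ^ 1 by rw [ZMod.pow_card, pow_one],
    residueBlockSum_self hodd h2, mul_left_comm]

end Semiprimitive

/-- If 2 is a semiprimitive root of an odd prime `p`, then
`S_p([2^p x, 2^p y)) = (-1)^{(p-1)/2} p · S_p([2x, 2y))` for all `x ≤ y`,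
where `S_p([a,b)) = S_p(b) - S_p(a)`. -/
theorem newmanSum_interval_prime_semiprimitiveRoot
    (p : ℕ) (hp : p.Prime) (hodd : Odd p)
    (horder : orderOf (2 : ZMod p) = (p - 1) / 2)
    (hnosol : ¬ ∃ x : ℕ, (2 : ZMod p) ^ x = -1) :
    ∀ x y : ℕ, x ≤ y →
      newmanSum p (2 ^ p * y) - newmanSum p (2 ^ p * x) =
        (-1) ^ ((p - 1) / 2) * p * (newmanSum p (2 * y) - newmanSum p (2 * x)) := by
  intro x y _
  have := Fact.mk hp
  have h2 : IsSemiprimitiveRoot (2 : ZMod p) := ⟨horder, hnosol⟩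
  rw [newmanSum_two_pow_mul_self hodd h2, newmanSum_two_pow_mul_self hodd h2]
  ring
end

section
/- Let p be a prime such that 2 is a primitive root modulo p, let ω be any primitive p-th root of unity in the complex numbers, let k ≥ p be a natural number, and let l be an integer with 1 ≤ l ≤ p−1. Then ∏_{j=0}^{k−1} (1 − ω^{l·2^j}) = p · ∏_{j=0}^{k−p} (1 − ω^{l·2^j}). -/
/-!
Since `2 ^ (p - 1) = 1` in `ZMod p`, the factor `1 - ω ^ (l * 2 ^ j)` is periodic in `j` with
period `p - 1`, so the first `p - 1` factors split off and the remaining ones form the right-hand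
product. As 2 generates `(ZMod p)ˣ` and `l ≢ 0`, the residues `l * 2 ^ j` for `j < p - 1` run
through all nonzero residues exactly once, so the split-off block is `∏_{a=1}^{p-1} (1 - ω ^ a)`,
which is `p` (evaluate `(X ^ p - 1) / (X - 1) = ∏ (X - ω ^ a)` at `X = 1`).
-/

open Finset

theorem Function.Periodic.prod_range_add {M : Type*} [CommMonoid M] {f : ℕ → M} {n : ℕ}
    (hf : Function.Periodic f n) (m : ℕ) :
    ∏ j ∈ range (n + m), f j = (∏ j ∈ range n, f j) * ∏ j ∈ range m, f j := by
  rw [Finset.prod_range_add]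
  congr 1
  exact prod_congr rfl fun j _ => by rw [add_comm, hf j]

theorem prod_range_orderOf_mul_pow_eq_prod_erase_zero {G M : Type*} [GroupWithZero G]
    [Fintype G] [DecidableEq G] [CommMonoid M] (F : G → M) {g c : G}
    (hg : orderOf g = Fintype.card G - 1) (hc : c ≠ 0) :
    ∏ j ∈ range (orderOf g), F (c * g ^ j) = ∏ a ∈ univ.erase 0, F a := by
  have hg0 : g ≠ 0 := by
    rintro rfl
    have := Fintype.one_lt_card (α := G)
    rw [orderOf_zero] at hg
    omega
  have hinj : Set.InjOn (fun j => c * g ^ j) (range (orderOf g)) := fun i hi j hj hij =>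
    pow_injOn_Iio_orderOf (by simpa using hi) (by simpa using hj) (mul_left_cancel₀ hc hij)
  have himage : (range (orderOf g)).image (fun j => c * g ^ j) = univ.erase 0 := by
    refine eq_of_subset_of_card_le (fun a ha => ?_) ?_
    · obtain ⟨j, -, rfl⟩ := mem_image.mp ha
      exact mem_erase.mpr ⟨mul_ne_zero hc (pow_ne_zero _ hg0), mem_univ _⟩
    · rw [card_image_of_injOn hinj, card_erase_of_mem (mem_univ _), card_univ, card_range, hg]
  rw [← himage, prod_image hinj]

theorem IsPrimitiveRoot.prod_erase_zero_one_sub_pow_val {R : Type*} [CommRing R] [IsDomain R]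
    {n : ℕ} [NeZero n] {μ : R} (hμ : IsPrimitiveRoot μ n) :
    ∏ a ∈ univ.erase (0 : ZMod n), (1 - μ ^ a.val) = n := by
  obtain ⟨m, rfl⟩ : ∃ m, n = m + 1 := Nat.exists_eq_add_one.mpr (Nat.pos_of_neZero n)
  rw [Nat.cast_succ, ← hμ.prod_one_sub_pow_eq_order]
  have hmem : ∀ a : ZMod (m + 1), a ∈ univ.erase 0 ↔ a.val ≠ 0 := by
    simp [ZMod.val_eq_zero]
  have hcast : ∀ j ∈ range m, ((j + 1 : ℕ) : ZMod (m + 1)).val = j + 1 := fun j hj =>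
    ZMod.val_cast_of_lt (by simpa using hj)
  refine prod_nbij' (fun a => a.val - 1) (fun j => ((j + 1 : ℕ) : ZMod (m + 1)))
    (fun a ha => ?_) (fun j hj => ?_) (fun a ha => ?_) (fun j hj => ?_) (fun a ha => ?_)
  · have := ZMod.val_lt a
    rw [hmem] at ha
    rw [mem_range]
    omega
  · rw [hmem, hcast j hj]
    omega
  · rw [hmem] at ha
    rw [Nat.sub_add_cancel (Nat.pos_of_ne_zero ha), ZMod.natCast_zmod_val]
  · rw [hcast j hj, Nat.add_sub_cancel]
  · rw [hmem] at ha
    rw [Nat.sub_add_cancel (Nat.pos_of_ne_zero ha)]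

/-- If 2 is a primitive root of a prime `p`, `ω` a primitive `p`-th root of unity in `ℂ`,
`k ≥ p` and `1 ≤ l ≤ p-1`, then
`∏_{j=0}^{k-1} (1 - ω^{l·2^j}) = p · ∏_{j=0}^{k-p} (1 - ω^{l·2^j})`. -/
theorem prod_one_sub_pow_shift
    (p : ℕ) (hp : p.Prime) (h2 : orderOf (2 : ZMod p) = p - 1)
    (ω : ℂ) (hω : IsPrimitiveRoot ω p)
    (k : ℕ) (hk : p ≤ k)
    (l : ℕ) (hl1 : 1 ≤ l) (hl2 : l ≤ p - 1) :
    ∏ j ∈ Finset.range k, (1 - ω ^ (l * 2 ^ j)) =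
      p * ∏ j ∈ Finset.range (k - p + 1), (1 - ω ^ (l * 2 ^ j)) := by
  have := Fact.mk hp
  set F : ZMod p → ℂ := fun a => 1 - ω ^ a.val
  have hF : ∀ j, 1 - ω ^ (l * 2 ^ j) = F (l * 2 ^ j) := fun j => by
    rw [show (l * 2 ^ j : ZMod p) = (l * 2 ^ j : ℕ) by push_cast; rfl]
    simp only [F]
    rw [ZMod.val_natCast, hω.eq_orderOf, pow_mod_orderOf]
  have hl : (l : ZMod p) ≠ 0 := by
    rw [Ne, ZMod.natCast_eq_zero_iff]
    exact Nat.not_dvd_of_pos_of_lt hl1 (by omega)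
  have hper : Function.Periodic (fun j => F (l * 2 ^ j)) (p - 1) := fun j => by
    simp only [pow_add, ← h2, pow_orderOf_eq_one, mul_one]
  have hblock : ∏ j ∈ range (p - 1), F (l * 2 ^ j) = p := by
    rw [← h2, prod_range_orderOf_mul_pow_eq_prod_erase_zero F (by rw [h2, ZMod.card]) hl,
      hω.prod_erase_zero_one_sub_pow_val]
  obtain ⟨m, rfl⟩ : ∃ m, k = p - 1 + m := ⟨k - (p - 1), by omega⟩
  simp only [hF]
  rw [hper.prod_range_add, hblock, show p - 1 + m - p + 1 = m by have := hp.pos; omega]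
end
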